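/- arXiv:1406.0949 — 6 statements merged into one kernel-verified Lean document; each statement's English description precedes it below -/
import Mathlib

section
/- Let m ≥ 3 be an odd integer. Then the coefficient of X^{φ(m)/2} in the m-th cyclotomic polynomial Φ_m(X) is an odd integer. -/
/-!
`Φ_m` is palindromic for `m ≥ 2`, so over `𝔽₂` its coefficients cancel in pairs and `Φ_m(1)`
reduces to the middle coefficient. For odd `m ≠ 1`, `1` is not a primitive `m`-th root of unity
in `𝔽₂`, hence `Φ_m(1) ≠ 0` in `𝔽₂`.
-/

open Polynomial

namespace Polynomial

theorem eval_one_eq_coeff_of_reverse_eq {R : Type*} [CommRing R] [CharP R 2]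
    {p : R[X]} (hp : p.reverse = p) {k : ℕ} (hk : p.natDegree = 2 * k) :
    p.eval 1 = p.coeff k := by
  have hsymm : ∀ j ≤ 2 * k, p.coeff j = p.coeff (2 * k - j) := fun j hj => by
    conv_lhs => rw [← hp]
    rw [coeff_reverse, hk, revAt_le hj]
  have hk_mem : k ∈ Finset.range (2 * k + 1) := Finset.mem_range.mpr (by omega)
  have hpairs : ∑ j ∈ (Finset.range (2 * k + 1)).erase k, p.coeff j = 0 := by
    refine Finset.sum_involution (fun j _ => 2 * k - j) (fun j hj => ?_) (fun j hj _ => ?_)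
      (fun j hj => ?_) (fun j hj => ?_) <;>
      simp only [Finset.mem_erase, Finset.mem_range] at hj ⊢
    · rw [← hsymm j (by omega), CharTwo.add_self_eq_zero]
    all_goals omega
  rw [eval_eq_sum_range, hk, ← Finset.sum_erase_add _ _ hk_mem]
  simp only [one_pow, mul_one, hpairs, zero_add]

theorem cyclotomic_int_reverse {m : ℕ} (hm : 2 ≤ m) :
    (cyclotomic m ℤ).reverse = cyclotomic m ℤ := by
  obtain ⟨ζ, hζ⟩ : ∃ ζ : ℂ, IsPrimitiveRoot ζ m :=
    ⟨_, Complex.isPrimitiveRoot_exp m (by omega)⟩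
  have hζ0 : ζ ≠ 0 := hζ.ne_zero (by omega)
  have : Invertible ζ⁻¹ := invertibleOfNonzero (inv_ne_zero hζ0)
  -- `ζ⁻¹` is a primitive root too, so `ζ` is a root of the reverse
  have hroot : aeval ζ (cyclotomic m ℤ).reverse = 0 := by
    rw [aeval_def, ← inv_inv ζ, ← invOf_eq_inv, eval₂_reverse_eq_zero_iff, ← eval_map,
      map_cyclotomic]
    exact hζ.inv.isRoot_cyclotomic (by omega)
  have hdvd : cyclotomic m ℤ ∣ (cyclotomic m ℤ).reverse := by
    nth_rw 1 [cyclotomic_eq_minpoly hζ (by omega)]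
    exact minpoly.isIntegrallyClosed_dvd (hζ.isIntegral (by omega)) hroot
  have hmonic : (cyclotomic m ℤ).reverse.Monic := by
    rw [Monic, reverse_leadingCoeff, trailingCoeff, natTrailingDegree_eq_zero.mpr
      (Or.inr (by simp [cyclotomic_coeff_zero ℤ hm])), cyclotomic_coeff_zero ℤ hm]
  exact (eq_of_monic_of_dvd_of_natDegree_le (cyclotomic.monic m ℤ) hmonic hdvd
    (reverse_natDegree_le _))

theorem cyclotomic_reverse {m : ℕ} (R : Type*) [CommRing R] [Nontrivial R]
    (hm : 2 ≤ m) : (cyclotomic m R).reverse = cyclotomic m R := by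
  rw [reverse, natDegree_cyclotomic, ← map_cyclotomic_int, reflect_map,
    ← natDegree_cyclotomic m ℤ, ← reverse, cyclotomic_int_reverse hm]

theorem eval_one_cyclotomic_ne_zero {R : Type*} [CommRing R] [IsDomain R] {n : ℕ}
    [NeZero (n : R)] (hn : n ≠ 1) : (cyclotomic n R).eval 1 ≠ 0 := fun h =>
  hn ((isRoot_cyclotomic_iff.mp h).eq_orderOf.trans orderOf_one)

end Polynomial

/-- Let `m ≥ 3` be an odd integer. The coefficient of `X^(φ(m)/2)` in the `m`-th
cyclotomic polynomial is an odd integer. -/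
theorem cyclotomic_middle_coeff_odd (m : ℕ) (hm : Odd m) (h3 : 3 ≤ m) :
    Odd ((Polynomial.cyclotomic m ℤ).coeff (m.totient / 2)) := by
  obtain ⟨k, hk⟩ := Nat.totient_even (by omega : 2 < m)
  have : NeZero (m : ZMod 2) := ⟨by simp [ZMod.natCast_eq_one_iff_odd.mpr hm]⟩
  have hmiddle : (cyclotomic m (ZMod 2)).eval 1 = (cyclotomic m (ZMod 2)).coeff k :=
    eval_one_eq_coeff_of_reverse_eq (cyclotomic_reverse _ (by omega))
      (by rw [natDegree_cyclotomic, hk, two_mul])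
  have hne := eval_one_cyclotomic_ne_zero (R := ZMod 2) (n := m) (by omega)
  rw [hmiddle, ← map_cyclotomic_int, coeff_map, eq_intCast, Ne,
    ZMod.intCast_eq_zero_iff_even, Int.not_even_iff_odd] at hne
  rwa [hk, ← two_mul, Nat.mul_div_cancel_left k two_pos]
end

section
/- Let ζ be a primitive m-th root of unity in ℂ where m ≥ 3 is odd, and let the group π = ⟨τ⟩ of order 2 act on the ring ℤ[ζ] by τ·ζ = ζ^{-1}. Then ℤ[ζ] is a free ℤπ-module of rank φ(m)/2. -/
/-!
Put `η = ζ + ζ⁻¹` and `k = φ(m) / 2`. Since `Φ_m` is palindromic of degree `2k`, `ζ⁻ᵏ Φ_m(ζ)` is a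
monic polynomial of degree `k` in `η`, so the span `M` of the `2k` elements `ζ ηⁱ`, `ζ⁻¹ ηⁱ`
(`i < k`), which `σ` swaps in pairs, is stable under multiplication by `η`. The relation
`ζ² = η ζ - 1` then gives `η ℤ[ζ] ⊆ M`, and `η = ζ⁻¹ (1 + ζ²)` is a unit because, `m` being odd,
`ζ²` is again a primitive `m`-th root of unity. So these elements span `ℤ[ζ]`, which is free of
rank `φ(m)` over `ℤ`, hence they form a basis.
-/

open Polynomial Finset

namespace Polynomial

section Dickson

variable {R : Type*} [CommRing R]

theorem natDegree_dickson_le (k : ℕ) (a : R) (n : ℕ) : (dickson k a n).natDegree ≤ n := by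
  induction n using Nat.twoStepInduction with
  | zero => simpa [dickson_zero] using natDegree_sub_le (3 : R[X]) k
  | one => simpa using natDegree_X_le
  | more n ih₀ ih₁ =>
    rw [dickson_add_two]
    refine (natDegree_sub_le _ _).trans (max_le ?_ ?_)
    · exact natDegree_mul_le.trans (by linarith [natDegree_X_le (R := R)])
    · exact natDegree_C_mul_le _ _ |>.trans (by omega)

theorem coeff_dickson_self (k : ℕ) (a : R) {n : ℕ} (hn : n ≠ 0) : (dickson k a n).coeff n = 1 := by
  induction n using Nat.twoStepInduction with
  | zero => exact absurd rfl hn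
  | one => simp
  | more n _ ih₁ =>
    rw [dickson_add_two, coeff_sub, coeff_X_mul, ih₁ (by omega), coeff_C_mul,
      coeff_eq_zero_of_natDegree_lt ((natDegree_dickson_le k a n).trans_lt (by omega)), mul_zero,
      sub_zero]

theorem dickson_one_one_aeval_add_inv {S : Type*} [CommRing S] [Algebra R S] {x y : S}
    (h : x * y = 1) (n : ℕ) : aeval (x + y) (dickson 1 (1 : R) n) = x ^ n + y ^ n := by
  rw [aeval_def, eval₂_eq_eval_map, map_dickson, map_one, dickson_one_one_eval_add_inv x y h]

end Dickson

section Palindromic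

variable {R : Type*} [CommRing R]

/-- For a palindromic `p` of degree `2 * k`, the polynomial `q` with `X ^ k * q (X + X⁻¹) = p`;
the `dickson 1 1 t` play the role of `X ^ t + X⁻ᵗ`. -/
noncomputable def palindromicHalf (p : R[X]) (k : ℕ) : R[X] :=
  C (p.coeff k) + ∑ t ∈ range k, C (p.coeff (k + 1 + t)) * dickson 1 1 (t + 1)

theorem natDegree_palindromicHalf_le (p : R[X]) (k : ℕ) :
    (palindromicHalf p k).natDegree ≤ k := by
  refine (natDegree_add_le _ _).trans (max_le (by simp) (natDegree_sum_le_of_forall_le _ _ ?_))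
  intro t ht
  exact (natDegree_C_mul_le _ _).trans
    ((natDegree_dickson_le 1 1 _).trans (by simpa using mem_range.mp ht))

theorem coeff_palindromicHalf_self (p : R[X]) (k : ℕ) :
    (palindromicHalf p k).coeff k = p.coeff (2 * k) := by
  cases k with
  | zero => simp [palindromicHalf]
  | succ j =>
    have hlow : ∀ t ∈ range j,
        (C (p.coeff (j + 1 + 1 + t)) * dickson 1 1 (t + 1)).coeff (j + 1) = 0 :=
      fun t ht => coeff_eq_zero_of_natDegree_lt <| (natDegree_C_mul_le _ _).trans_lt <|
        (natDegree_dickson_le 1 1 _).trans_lt (by simpa using mem_range.mp ht)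
    rw [palindromicHalf, coeff_add, coeff_C, if_neg j.succ_ne_zero, zero_add, finsetSum_coeff,
      sum_range_succ, sum_eq_zero hlow, coeff_C_mul, coeff_dickson_self 1 1 j.succ_ne_zero]
    ring_nf

theorem Monic.palindromicHalf {p : R[X]} (hp : p.Monic) {k : ℕ} (hdeg : p.natDegree = 2 * k) :
    (p.palindromicHalf k).Monic :=
  monic_of_natDegree_le_of_coeff_eq_one k (natDegree_palindromicHalf_le p k)
    (by rw [coeff_palindromicHalf_self, ← hdeg, hp.coeff_natDegree])

theorem Monic.natDegree_palindromicHalf [Nontrivial R] {p : R[X]} (hp : p.Monic) {k : ℕ}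
    (hdeg : p.natDegree = 2 * k) : (p.palindromicHalf k).natDegree = k :=
  natDegree_eq_of_le_of_coeff_ne_zero (natDegree_palindromicHalf_le p k) <| by
    rw [coeff_palindromicHalf_self, ← hdeg, hp.coeff_natDegree]
    exact one_ne_zero

theorem pow_mul_aeval_palindromicHalf {S : Type*} [CommRing S] [Algebra R S] {p : R[X]} {k : ℕ}
    (hdeg : p.natDegree = 2 * k) (hrev : p.reverse = p) {x y : S} (hxy : x * y = 1) :
    x ^ k * aeval (x + y) (p.palindromicHalf k) = aeval x p := by
  have hsymm : ∀ t < k, p.coeff (k + 1 + t) = p.coeff (k - 1 - t) := fun t ht => by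
    conv_lhs => rw [← hrev]
    rw [coeff_reverse, hdeg, revAt_le (by omega)]
    congr 1
    omega
  have hinv : ∀ t < k, x ^ k * y ^ (t + 1) = x ^ (k - 1 - t) := fun t ht => by
    obtain ⟨s, rfl⟩ : ∃ s, k = s + (t + 1) := ⟨k - (t + 1), by omega⟩
    rw [pow_add, mul_assoc, ← mul_pow, hxy, one_pow, mul_one, show s + (t + 1) - 1 - t = s by omega]
  have hterm : ∀ t ∈ range k,
      x ^ k * aeval (x + y) (C (p.coeff (k + 1 + t)) * dickson 1 1 (t + 1))
        = p.coeff (k - 1 - t) • x ^ (k - 1 - t) + p.coeff (k + 1 + t) • x ^ (k + 1 + t) := by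
    intro t ht
    rw [map_mul, aeval_C, dickson_one_one_aeval_add_inv hxy, ← hsymm t (mem_range.mp ht),
      Algebra.smul_def, Algebra.smul_def, ← hinv t (mem_range.mp ht)]
    ring
  rw [aeval_eq_sum_range (p := p), hdeg, show 2 * k + 1 = k + 1 + k by ring, sum_range_add,
    sum_range_succ, ← sum_range_reflect, palindromicHalf, map_add, aeval_C, map_sum, mul_add,
    mul_sum, sum_congr rfl hterm, sum_add_distrib, Algebra.smul_def]
  ring

end Palindromic

theorem cyclotomic_int_reverse_s3 {n : ℕ} (hn : 2 ≤ n) :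
    (cyclotomic n ℤ).reverse = cyclotomic n ℤ := by
  obtain ⟨ζ, hζ⟩ : ∃ ζ : ℂ, IsPrimitiveRoot ζ n := ⟨_, Complex.isPrimitiveRoot_exp n (by omega)⟩
  have hmonic : (cyclotomic n ℤ).reverse.Monic := by
    rw [Monic, reverse_leadingCoeff, trailingCoeff,
      natTrailingDegree_eq_zero.mpr (.inr (by simp [cyclotomic_coeff_zero ℤ hn])),
      cyclotomic_coeff_zero ℤ hn]
  have hroot : aeval ζ⁻¹ (cyclotomic n ℤ).reverse = 0 := by
    let := invertibleOfNonzero (hζ.ne_zero (by omega))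
    rw [aeval_def, ← invOf_eq_inv, eval₂_reverse_eq_zero_iff, ← aeval_def,
      cyclotomic_eq_minpoly hζ (by omega), minpoly.aeval]
  have hdvd : cyclotomic n ℤ ∣ (cyclotomic n ℤ).reverse := by
    simpa only [← cyclotomic_eq_minpoly hζ.inv (by omega)] using
      minpoly.isIntegrallyClosed_dvd (hζ.inv.isIntegral (by omega)) hroot
  exact eq_of_monic_of_dvd_of_natDegree_le (cyclotomic.monic n ℤ) hmonic hdvd
    (reverse_natDegree_le _)

theorem Monic.pow_natDegree_eq_neg_sum {R A : Type*} [CommRing R] [CommRing A] [Algebra R A]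
    {Q : R[X]} (hQ : Q.Monic) {η : A} (hη : aeval η Q = 0) :
    η ^ Q.natDegree = -∑ i ∈ range Q.natDegree, Q.coeff i • η ^ i := by
  rw [hQ.as_sum] at hη
  simpa [eq_neg_iff_add_eq_zero, Algebra.smul_def] using hη

end Polynomial

section PairedPowers

variable {R A : Type*} [CommRing R] [CommRing A] [Algebra R A]

def pairedPowers (z w : A) (k : ℕ) (i : Fin k × Bool) : A :=
  (bif i.2 then w else z) * (z + w) ^ (i.1 : ℕ)

theorem map_pairedPowers {F : Type*} [FunLike F A A] [RingHomClass F A A] (σ : F) {z : A}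
    (hz : z * σ z = 1) {k : ℕ} (i : Fin k × Bool) :
    σ (pairedPowers z (σ z) k i) = pairedPowers z (σ z) k (i.1, !i.2) := by
  have hσσ : z = σ (σ z) := left_inv_eq_right_inv hz (by rw [← map_mul, hz, map_one])
  obtain ⟨i, _ | _⟩ := i <;> simp [pairedPowers, ← hσσ, add_comm]

variable {z w : A} {k : ℕ} {Q : R[X]}

theorem mul_mem_span_pairedPowers (hQ : Q.Monic) (hdeg : Q.natDegree = k)
    (hη : aeval (z + w) Q = 0) {x : A}
    (hx : x ∈ Submodule.span R (Set.range (pairedPowers z w k))) :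
    (z + w) * x ∈ Submodule.span R (Set.range (pairedPowers z w k)) := by
  set M := Submodule.span R (Set.range (pairedPowers z w k))
  have hgen : ∀ b, ∀ i < k, (bif b then w else z) * (z + w) ^ i ∈ M :=
    fun b i hi => Submodule.subset_span ⟨(⟨i, hi⟩, b), rfl⟩
  suffices M ≤ M.comap (LinearMap.mulLeft R (z + w)) from this hx
  rw [Submodule.span_le]
  rintro _ ⟨⟨i, b⟩, rfl⟩
  change (z + w) * ((bif b then w else z) * (z + w) ^ (i : ℕ)) ∈ M
  rw [mul_left_comm, ← pow_succ']
  rcases (show (i : ℕ) + 1 ≤ k from i.2).lt_or_eq with hi | hi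
  · exact hgen b _ hi
  · rw [hi, ← hdeg, hQ.pow_natDegree_eq_neg_sum hη, mul_neg, mul_sum]
    refine M.neg_mem (M.sum_mem fun j hj => ?_)
    rw [mul_smul_comm]
    exact M.smul_mem _ (hgen b j (hdeg ▸ mem_range.mp hj))

theorem span_pairedPowers_eq_top (hzw : z * w = 1) (hk : k ≠ 0) (hQ : Q.Monic)
    (hdeg : Q.natDegree = k) (hη : aeval (z + w) Q = 0) (hunit : IsUnit (z + w))
    (hadj : Algebra.adjoin R {z} = ⊤) :
    Submodule.span R (Set.range (pairedPowers z w k)) = ⊤ := by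
  set M := Submodule.span R (Set.range (pairedPowers z w k))
  have hstable : ∀ x ∈ M, (z + w) * x ∈ M := fun x => mul_mem_span_pairedPowers hQ hdeg hη
  set T := M.comap (LinearMap.mulLeft R (z + w))
  have hgen₀ : ∀ b, pairedPowers z w k (⟨0, Nat.pos_of_ne_zero hk⟩, b) ∈ M :=
    fun b => Submodule.subset_span ⟨_, rfl⟩
  have hpow : ∀ n, z ^ n ∈ T := by
    intro n
    induction n using Nat.twoStepInduction with
    | zero => simpa [T, pairedPowers] using M.add_mem (hgen₀ false) (hgen₀ true)
    | one => simpa [T, pairedPowers] using hstable _ (hgen₀ false)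
    | more n ih₀ ih₁ =>
      rw [show z ^ (n + 2) = (z + w) * z ^ (n + 1) - z ^ n by linear_combination (-z ^ n) * hzw]
      exact T.sub_mem (hstable _ ih₁) ih₀
  have hmemT : ∀ a, a ∈ T := by
    intro a
    have ha : a ∈ Subalgebra.toSubmodule (Algebra.adjoin R {z}) := by simp [hadj]
    rw [Algebra.adjoin_eq_span] at ha
    refine (Submodule.span_le.mpr ?_ : _ ≤ T) ha
    intro x hx
    obtain ⟨n, rfl⟩ := Submonoid.mem_closure_singleton.mp hx
    exact hpow n
  refine eq_top_iff.mpr fun a _ => ?_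
  simpa [T, ← mul_assoc] using hmemT (hunit.unit⁻¹ * a)

end PairedPowers

namespace IsPrimitiveRoot

variable {A : Type*} [CommRing A] [IsDomain A] {z w : A} {m : ℕ}

theorem aeval_add_palindromicHalf_cyclotomic (hz : IsPrimitiveRoot z m) (hm : 2 ≤ m) {k : ℕ}
    (hk : m.totient = 2 * k) (hzw : z * w = 1) :
    aeval (z + w) ((cyclotomic m ℤ).palindromicHalf k) = 0 := by
  have hroot : aeval z (cyclotomic m ℤ) = 0 := by
    rw [aeval_def, eval₂_eq_eval_map, map_cyclotomic]
    exact hz.isRoot_cyclotomic (by omega)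
  rw [← pow_mul_aeval_palindromicHalf (by rw [natDegree_cyclotomic, hk])
    (cyclotomic_int_reverse_s3 hm) hzw] at hroot
  exact ((IsUnit.of_mul_eq_one w hzw).pow k).mul_right_eq_zero.mp hroot

theorem isUnit_add_of_mul_eq_one (hz : IsPrimitiveRoot z m) (hodd : Odd m) (hm : 2 ≤ m)
    (hzw : z * w = 1) : IsUnit (z + w) := by
  have hcop : Nat.Coprime 2 m := Nat.coprime_two_left.mpr hodd
  have h : IsUnit (z ^ 2 + 1) := by
    simpa [geom_sum_two] using (hz.pow_of_coprime 2 hcop).geom_sum_isUnit hm hcop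
  rw [show z + w = w * (z ^ 2 + 1) by linear_combination (-z) * hzw]
  exact (IsUnit.of_mul_eq_one_right z hzw).mul h

theorem finrank_int_adjoin {K : Type*} [Field K] [CharZero K] {ζ : K} (hζ : IsPrimitiveRoot ζ m)
    (hm : 0 < m) : Module.finrank ℤ (Algebra.adjoin ℤ {ζ}) = m.totient := by
  rw [(Algebra.adjoin.powerBasis' (hζ.isIntegral hm)).finrank, Algebra.adjoin.powerBasis'_dim,
    ← cyclotomic_eq_minpoly hζ hm, natDegree_cyclotomic]

end IsPrimitiveRoot

/-- Let `ζ` be a primitive `m`-th root of unity in `ℂ`, `m ≥ 3` odd, and let the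
group `π = ⟨τ⟩` of order 2 act on `ℤ[ζ]` by `τ·ζ = ζ⁻¹` (i.e. via the automorphism
`σ` with `σ ζ = ζ⁻¹`).  Then `ℤ[ζ]` is a free `ℤπ`-module of rank `φ(m)/2`:
there is a `ℤ`-basis indexed by `Fin (φ(m)/2) × Bool` which `σ` permutes by
swapping the two elements of each pair. -/
theorem zeta_ring_free_over_group_ring_C2
    (m : ℕ) (hm : Odd m) (h3 : 3 ≤ m) (ζ : ℂ) (hζ : IsPrimitiveRoot ζ m)
    (σ : Algebra.adjoin ℤ ({ζ} : Set ℂ) ≃ₐ[ℤ] Algebra.adjoin ℤ ({ζ} : Set ℂ))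
    (hσ : ((σ ⟨ζ, Algebra.self_mem_adjoin_singleton ℤ ζ⟩ :
        Algebra.adjoin ℤ ({ζ} : Set ℂ)) : ℂ) = ζ⁻¹) :
    ∃ b : Module.Basis (Fin (m.totient / 2) × Bool) ℤ (Algebra.adjoin ℤ ({ζ} : Set ℂ)),
      ∀ i : Fin (m.totient / 2),
        σ (b (i, false)) = b (i, true) ∧ σ (b (i, true)) = b (i, false) := by
  set k := m.totient / 2
  have hk : m.totient = 2 * k := (Nat.two_mul_div_two_of_even (Nat.totient_even (by omega))).symm
  have hk0 : k ≠ 0 := by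
    have := Nat.totient_pos.mpr (show 0 < m by omega)
    omega
  set z : Algebra.adjoin ℤ ({ζ} : Set ℂ) := ⟨ζ, Algebra.self_mem_adjoin_singleton ℤ ζ⟩
  have hz : IsPrimitiveRoot z m := IsPrimitiveRoot.coe_submonoidClass_iff.mp hζ
  have hzσ : z * σ z = 1 := Subtype.ext <| by simp [z, hσ, hζ.ne_zero (by omega)]
  have hdeg : (cyclotomic m ℤ).natDegree = 2 * k := by rw [natDegree_cyclotomic, hk]
  have hspan := span_pairedPowers_eq_top hzσ hk0 ((cyclotomic.monic m ℤ).palindromicHalf hdeg)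
    ((cyclotomic.monic m ℤ).natDegree_palindromicHalf hdeg)
    (hz.aeval_add_palindromicHalf_cyclotomic (by omega) hk hzσ)
    (hz.isUnit_add_of_mul_eq_one hm (by omega) hzσ)
    (by rw [← (Algebra.adjoin.powerBasis' (hζ.isIntegral (by omega))).adjoin_gen_eq_top,
      Algebra.adjoin.powerBasis'_gen])
  have hrank : Fintype.card (Fin k × Bool) = Module.finrank ℤ (Algebra.adjoin ℤ ({ζ} : Set ℂ)) := by
    simp [hζ.finrank_int_adjoin (by omega), hk, mul_comm]
  refine ⟨basisOfTopLeSpanOfCardEqFinrank _ hspan.ge hrank, fun i => ?_⟩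
  simp only [coe_basisOfTopLeSpanOfCardEqFinrank]
  exact ⟨map_pairedPowers σ hzσ (i, false), map_pairedPowers σ hzσ (i, true)⟩
end

section
/- Let d ≥ 3 be an odd integer, ζ a primitive d-th root of unity, and w = ζ + ζ² + ⋯ + ζ^{(d−1)/2} ∈ ℤ[ζ]. Then w is a unit in ℤ[ζ], and 1 + w + \bar{w} = 0, where \bar{w} denotes the image of w under the automorphism ζ ↦ ζ^{-1}. -/
/-!
Write `d = 2m + 1`. Then `w = ζ (1 + ζ + ⋯ + ζ^(m-1))` is a root of unity times the cyclotomic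
unit `(ζ^m - 1)/(ζ - 1)`, a unit because `m` is coprime to `d`. Since `σ ζ^i = ζ^(d-i)`, the sum
`1 + w + σ w` is `1 + ζ + ⋯ + ζ^(d-1)`, which vanishes.
-/

open Finset

theorem sum_Icc_one_pow_eq_mul_geom_sum {R : Type*} [CommSemiring R] (x : R) (m : ℕ) :
    ∑ i ∈ Icc 1 m, x ^ i = x * ∑ i ∈ range m, x ^ i := by
  rw [← Ico_add_one_right_eq_Icc, sum_Ico_eq_sum_range, add_tsub_cancel_right, mul_sum]
  exact sum_congr rfl fun i _ => by ring

theorem one_add_sum_Icc_pow_add_sum_Icc_pow_eq_geom_sum {R : Type*} [CommSemiring R]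
    {x y : R} (hxy : x * y = 1) {m : ℕ} (hx : x ^ (2 * m + 1) = 1) :
    1 + ∑ i ∈ Icc 1 m, x ^ i + ∑ i ∈ Icc 1 m, y ^ i = ∑ i ∈ range (2 * m + 1), x ^ i := by
  have hy (i : ℕ) (hi : i ≤ 2 * m + 1) : y ^ i = x ^ (2 * m + 1 - i) := by
    calc y ^ i = y ^ i * x ^ (i + (2 * m + 1 - i)) := by rw [Nat.add_sub_cancel' hi, hx, mul_one]
      _ = (x * y) ^ i * x ^ (2 * m + 1 - i) := by ring
      _ = x ^ (2 * m + 1 - i) := by rw [hxy, one_pow, one_mul]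
  have hreflect : ∑ i ∈ Icc 1 m, y ^ i = ∑ i ∈ Ico (m + 1) (2 * m + 1), x ^ i := by
    rw [← Ico_add_one_right_eq_Icc, sum_congr rfl fun i hi => hy i (by rw [mem_Ico] at hi; omega),
      sum_Ico_reflect (fun j => x ^ j) 1 (n := 2 * m + 1) (by omega)]
    rw [show 2 * m + 1 + 1 - (m + 1) = m + 1 by omega, show 2 * m + 1 + 1 - 1 = 2 * m + 1 by omega]
  rw [hreflect, ← Ico_add_one_right_eq_Icc, range_eq_Ico,
    ← sum_Ico_consecutive _ (Nat.zero_le 1) (by omega : 1 ≤ 2 * m + 1),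
    ← sum_Ico_consecutive _ (by omega : 1 ≤ m + 1) (by omega : m + 1 ≤ 2 * m + 1)]
  simp [add_assoc]

/-- Let `d ≥ 3` be odd, `ζ` a primitive `d`-th root of unity and
`w = ζ + ζ² + ⋯ + ζ^((d−1)/2) ∈ ℤ[ζ]`.  Then `w` is a unit of `ℤ[ζ]` and
`1 + w + σ(w) = 0`, where `σ` is the automorphism of `ℤ[ζ]` with `σ ζ = ζ⁻¹`. -/
theorem w_unit_and_trace_relation
    (d : ℕ) (hd : 3 ≤ d) (hodd : Odd d) (ζ : ℂ) (hζ : IsPrimitiveRoot ζ d)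
    (σ : Algebra.adjoin ℤ ({ζ} : Set ℂ) ≃ₐ[ℤ] Algebra.adjoin ℤ ({ζ} : Set ℂ))
    (hσ : ((σ ⟨ζ, Algebra.self_mem_adjoin_singleton ℤ ζ⟩ :
        Algebra.adjoin ℤ ({ζ} : Set ℂ)) : ℂ) = ζ⁻¹) :
    let R := Algebra.adjoin ℤ ({ζ} : Set ℂ)
    let z : R := ⟨ζ, Algebra.self_mem_adjoin_singleton ℤ ζ⟩
    let w : R := ∑ i ∈ Finset.Icc 1 ((d - 1) / 2), z ^ i
    IsUnit w ∧ 1 + w + σ w = 0 := by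
  intro R z w
  obtain ⟨m, rfl⟩ := hodd
  have hm : (2 * m + 1 - 1) / 2 = m := by omega
  have hz : IsPrimitiveRoot z (2 * m + 1) :=
    hζ.of_map_of_injective (f := R.val) Subtype.val_injective
  have hzσz : z * σ z = 1 := Subtype.ext <| by
    simp [z, hσ, hζ.ne_zero (by omega : 2 * m + 1 ≠ 0)]
  refine ⟨?_, ?_⟩
  · simp only [w, hm, sum_Icc_one_pow_eq_mul_geom_sum]
    exact (hz.isUnit (by omega)).mul (hz.geom_sum_isUnit (by omega) (by simp))
  · have hσw : σ w = ∑ i ∈ Icc 1 m, σ z ^ i := by simp only [w, hm, map_sum, map_pow]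
    rw [hσw, show w = ∑ i ∈ Icc 1 m, z ^ i by simp only [w, hm],
      one_add_sum_Icc_pow_add_sum_Icc_pow_eq_geom_sum hzσz hz.pow_eq_one,
      hz.geom_sum_eq_zero (by omega)]
end

section
/- Let d ≥ 3, ζ = ζ_d a primitive d-th root of unity, S = ℤ[ζ], and Λ = S ∘ ⟨τ⟩ the twisted group ring with τ² = 1 acting by τ·ζ = ζ^{-1}, where d is an odd prime power p^c. Then as left Λ-modules, Λ ≅ S ⊕ Q where Q = (ζ − ζ^{-1})S, with Λ acting on S and Q via (a·u_τ)·α = a·τ(α). -/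
/-!
The map `λ ↦ (λ • 1, λ • (1 - ζ))` from `Λ` to `S × S` is `Λ`-linear, and on a pair
`λ = a + b u_τ` it reads `(a + b, a (1 - ζ) + b (1 - ζ⁻¹))`. The determinant of this
`2 × 2` system is `ζ - ζ⁻¹`, the generator of `Q`, and `1 - ζ⁻¹` lies in `Q` because `d` is odd:
`1 - ζ⁻¹ = (ζ - ζ⁻¹)(1 + ζ² + ⋯ + ζ^{d-1})`. Hence the map is a bijection onto `S × Q`.
-/

section SpanSingleton

variable {R : Type*} [CommRing R] [IsDomain R]

noncomputable def prodEquivProdSpanSingleton {π : R} (hπ : π ≠ 0) (v : R)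
    (hv : v ∈ Ideal.span {π}) : (R × R) ≃+ (R × Ideal.span {π}) :=
  let μ := LinearEquiv.toSpanNonzeroSingleton R R π hπ
  let ν (s : R) : Ideal.span {π} := ⟨s * v, Ideal.mul_mem_left _ s hv⟩
  { toFun x := (x.1 + x.2, ν (x.1 + x.2) - μ x.1)
    invFun y := (μ.symm (ν y.1 - y.2), y.1 - μ.symm (ν y.1 - y.2))
    left_inv x := by simp
    right_inv y := by simp
    map_add' x y := by
      ext
      · simp only [Prod.fst_add, Prod.snd_add]; ring
      · simp only [ν, Prod.fst_add, Prod.snd_add, map_add, Submodule.coe_sub, Submodule.coe_add]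
        ring }

theorem prodEquivProdSpanSingleton_apply_fst {π : R} (hπ : π ≠ 0) (v : R)
    (hv : v ∈ Ideal.span {π}) (x : R × R) :
    (prodEquivProdSpanSingleton hπ v hv x).1 = x.1 + x.2 :=
  rfl

theorem prodEquivProdSpanSingleton_apply_snd {π : R} (hπ : π ≠ 0) (v : R)
    (hv : v ∈ Ideal.span {π}) (x : R × R) :
    ((prodEquivProdSpanSingleton hπ v hv x).2 : R) = (x.1 + x.2) * v - x.1 * π := by
  simp [prodEquivProdSpanSingleton, mul_comm]

end SpanSingleton

section Twisted

variable {R F : Type*} [CommRing R] [FunLike F R R] [RingHomClass F R R] (σ : F)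

/-- `(a, b)` stands for `a + b u_τ` in the twisted group ring `R ∘ ⟨τ⟩`, `τ` acting through `σ`. -/
def twistedMul (a b : R × R) : R × R :=
  (a.1 * b.1 + a.2 * σ b.2, a.1 * b.2 + a.2 * σ b.1)

def twistedSMul (a : R × R) (s : R) : R :=
  a.1 * s + a.2 * σ s

theorem twistedSMul_twistedMul {σ : F} (hσ : Function.Involutive σ) (a b : R × R) (s : R) :
    twistedSMul σ (twistedMul σ a b) s = twistedSMul σ a (twistedSMul σ b s) := by
  simp only [twistedSMul, twistedMul, map_add, map_mul, hσ s]
  ring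

theorem exists_addEquiv_prod_span_twisted [IsDomain R] {σ : F} (hσ : Function.Involutive σ)
    {π : R} (hπ : π ≠ 0) {y : R} (hyπ : σ y - y = π) (hy : σ y ∈ Ideal.span {π}) :
    ∃ φ : (R × R) ≃+ (R × Ideal.span {π}), ∀ a b : R × R,
      (φ (twistedMul σ a b)).1 = twistedSMul σ a (φ b).1 ∧
      ((φ (twistedMul σ a b)).2 : R) = twistedSMul σ a (φ b).2 := by
  let φ := prodEquivProdSpanSingleton hπ (σ y) hy
  have hφ₁ (x : R × R) : (φ x).1 = twistedSMul σ x 1 := by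
    simp [φ, prodEquivProdSpanSingleton_apply_fst, twistedSMul]
  have hφ₂ (x : R × R) : ((φ x).2 : R) = twistedSMul σ x y := by
    rw [prodEquivProdSpanSingleton_apply_snd, ← hyπ, twistedSMul]
    ring
  refine ⟨φ, fun a b => ⟨?_, ?_⟩⟩
  · rw [hφ₁, hφ₁, twistedSMul_twistedMul hσ]
  · rw [hφ₂, hφ₂, twistedSMul_twistedMul hσ]

end Twisted

/-- `1 - w = (z - w)(1 + z² + ⋯ + z^{2m})`, since `z - w = w (z² - 1)` and `z^{2m+2} = z`. -/
theorem one_sub_mem_span_sub_of_mul_eq_one {R : Type*} [CommRing R] {z w : R} (hzw : z * w = 1)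
    {m : ℕ} (hz : z ^ (2 * m + 1) = 1) : 1 - w ∈ Ideal.span {z - w} := by
  set S := ∑ i ∈ Finset.range (m + 1), (z ^ 2) ^ i
  have geom : S * (z ^ 2 - 1) = (z ^ 2) ^ (m + 1) - 1 := geom_sum_mul _ _
  refine Ideal.mem_span_singleton'.mpr ⟨S, ?_⟩
  linear_combination w * geom + (z ^ (2 * m + 1) - S * z) * hzw + hz

theorem IsPrimitiveRoot.sub_inv_ne_zero {K : Type*} [Field K] {ζ : K} {d : ℕ}
    (hζ : IsPrimitiveRoot ζ d) (hd : 2 < d) : ζ - ζ⁻¹ ≠ 0 := by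
  have hζ0 : ζ ≠ 0 := hζ.ne_zero (by omega)
  intro h
  have hsq : ζ ^ 2 = 1 := by
    field_simp at h
    linear_combination h
  exact absurd (Nat.le_of_dvd two_pos (hζ.pow_eq_one_iff_dvd 2 |>.mp hsq)) (by omega)

theorem Algebra.adjoin_singleton_involutive {R A : Type*} [CommSemiring R] [Semiring A]
    [Algebra R A] {x : A} (σ : adjoin R {x} ≃ₐ[R] adjoin R {x})
    (hx : σ (σ ⟨x, self_mem_adjoin_singleton R x⟩) = ⟨x, self_mem_adjoin_singleton R x⟩) :
    Function.Involutive σ := by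
  have hid : ((σ.trans σ : adjoin R {x} ≃ₐ[R] adjoin R {x}) : adjoin R {x} →ₐ[R] adjoin R {x}) =
      AlgHom.id R _ := by
    refine AlgHom.ext_of_adjoin_eq_top adjoin_adjoin_coe_preimage ?_
    rintro ⟨y, _⟩ (rfl : y = x)
    exact hx
  exact fun y => DFunLike.congr_fun hid y

theorem twisted_group_ring_decomposition_general
    (p c : ℕ) (hpo : Odd p)
    (d : ℕ) (hd : d = p ^ c) (hd3 : 3 ≤ d)
    (ζ : ℂ) (hζ : IsPrimitiveRoot ζ d)
    (σ : Algebra.adjoin ℤ ({ζ} : Set ℂ) ≃ₐ[ℤ] Algebra.adjoin ℤ ({ζ} : Set ℂ))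
    (hσ : ((σ ⟨ζ, Algebra.self_mem_adjoin_singleton ℤ ζ⟩ :
        Algebra.adjoin ℤ ({ζ} : Set ℂ)) : ℂ) = ζ⁻¹) :
    let R := Algebra.adjoin ℤ ({ζ} : Set ℂ)
    let z : R := ⟨ζ, Algebra.self_mem_adjoin_singleton ℤ ζ⟩
    let mul : R × R → R × R → R × R := fun a b =>
      (a.1 * b.1 + a.2 * σ b.2, a.1 * b.2 + a.2 * σ b.1)
    let act : R × R → R → R := fun a s => a.1 * s + a.2 * σ s
    let Q : Ideal R := Ideal.span {z - σ z}
    ∃ φ : (R × R) ≃+ (R × Q),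
      ∀ a b : R × R,
        (φ (mul a b)).1 = act a ((φ b).1) ∧
        ((φ (mul a b)).2 : R) = act a (((φ b).2 : R)) := by
  intro R z mul act Q
  have hσz : ((σ z : R) : ℂ) = ζ⁻¹ := hσ
  have hzσ : z * σ z = 1 := Subtype.ext <| by
    rw [MulMemClass.coe_mul, hσz, OneMemClass.coe_one]
    exact mul_inv_cancel₀ (hζ.ne_zero (by omega))
  have hσσ : σ (σ z) = z :=
    (left_inv_eq_right_inv hzσ (by rw [← map_mul, hzσ, map_one])).symm
  obtain ⟨m, hm⟩ : Odd d := hd ▸ hpo.pow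
  have hzd : z ^ (2 * m + 1) = 1 := Subtype.ext <| by
    simp only [SubmonoidClass.coe_pow, ← hm, OneMemClass.coe_one]
    exact hζ.pow_eq_one
  have hπ : z - σ z ≠ 0 := fun h => hζ.sub_inv_ne_zero (by omega) <| by
    simpa [hσz] using congrArg Subtype.val h
  exact exists_addEquiv_prod_span_twisted (Algebra.adjoin_singleton_involutive σ hσσ) hπ
    (y := 1 - z) (by simp only [map_sub, map_one]; ring)
    (by simpa only [map_sub, map_one] using one_sub_mem_span_sub_of_mul_eq_one hzσ hzd)

/-- Let `d = p^c ≥ 3` be an odd prime power, `ζ` a primitive `d`-th root of unity,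
`S = ℤ[ζ]` with conjugation `σ` (σ ζ = ζ⁻¹), and `Λ = S ∘ ⟨τ⟩` the twisted group
ring, realized as pairs `(a,b) = a + b u_τ` with multiplication
`(a,b)(c,e) = (a c + b σ(e), a e + b σ(c))` (since `u_τ² = 1`).  `S` and the
ambiguous ideal `Q = (ζ − ζ⁻¹)S` are `Λ`-modules via `(a,b)·s = a s + b σ(s)`.
Then `Λ ≅ S ⊕ Q` as left `Λ`-modules. -/
theorem twisted_group_ring_decomposition
    (p c : ℕ) (hp : p.Prime) (hpo : Odd p) (hc : 1 ≤ c)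
    (d : ℕ) (hd : d = p ^ c) (hd3 : 3 ≤ d)
    (ζ : ℂ) (hζ : IsPrimitiveRoot ζ d)
    (σ : Algebra.adjoin ℤ ({ζ} : Set ℂ) ≃ₐ[ℤ] Algebra.adjoin ℤ ({ζ} : Set ℂ))
    (hσ : ((σ ⟨ζ, Algebra.self_mem_adjoin_singleton ℤ ζ⟩ :
        Algebra.adjoin ℤ ({ζ} : Set ℂ)) : ℂ) = ζ⁻¹) :
    let R := Algebra.adjoin ℤ ({ζ} : Set ℂ)
    let z : R := ⟨ζ, Algebra.self_mem_adjoin_singleton ℤ ζ⟩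
    let mul : R × R → R × R → R × R := fun a b =>
      (a.1 * b.1 + a.2 * σ b.2, a.1 * b.2 + a.2 * σ b.1)
    let act : R × R → R → R := fun a s => a.1 * s + a.2 * σ s
    let Q : Ideal R := Ideal.span {z - σ z}
    ∃ φ : (R × R) ≃+ (R × Q),
      ∀ a b : R × R,
        (φ (mul a b)).1 = act a ((φ b).1) ∧
        ((φ (mul a b)).2 : R) = act a (((φ b).2 : R)) :=
  twisted_group_ring_decomposition_general p c hpo d hd hd3 ζ hζ σ hσ
end

section
/- Let π be a finite group and M a ℤπ-lattice (finitely generated and ℤ-torsion-free). Suppose M is invertible, i.e. a direct summand of a permutation π-lattice. Then for any exact sequence of π-lattices 0 → C → E → M → 0 with C coflabby (H¹(π', C) = 0 for all subgroups π' ≤ π), the sequence splits. -/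
/-!
Since `M` is an equivariant retract `ℤ[S] → M` of the permutation lattice `ℤ[S]`, it suffices to
lift that retraction equivariantly through `E → M` and restrict the lift to `M`. On the basis of
`ℤ[S]` this amounts to choosing, for one point `s` of each orbit, a lift of the image of `s` that
is fixed by the stabilizer `H` of `s`; the lifts at the other points of the orbit are its
translates. An arbitrary lift `e₀` is off by the cocycle `h ↦ h • e₀ - e₀` of `H` with values in
`C`, and coflabbiness of `C` makes it a coboundary `h ↦ h • c - c`, so `e₀ - c` is fixed by `H`.
-/

open groupCohomology MulAction

theorem MulAction.exists_mulActionHom_of_stabilizer_fixed {π S Y : Type*} [Group π]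
    [MulAction π S] [MulAction π Y] (P : S → Y → Prop)
    (hP : ∀ (g : π) s y, P s y → P (g • s) (g • y))
    (h : ∀ s, ∃ y, P s y ∧ ∀ g ∈ stabilizer π s, g • y = y) :
    ∃ F : S →[π] Y, ∀ s, P s (F s) := by
  choose y hPy hy using h
  let rep : S → S := fun s => (Quotient.mk (orbitRel π S) s).out
  have rep_smul : ∀ (g : π) s, rep (g • s) = rep s := fun g s =>
    congrArg Quotient.out (Quotient.sound (mem_orbit s g))
  have exists_smul_rep : ∀ s, ∃ g : π, g • rep s = s := fun s =>
    mem_orbit_iff.mp ((orbitRel π S).iseqv.symm (Quotient.mk_out (s := orbitRel π S) s))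
  choose u hu using exists_smul_rep
  have smul_eq_smul : ∀ (a b : π) s, a • s = b • s → a • y s = b • y s := fun a b s hab => by
    rw [← inv_smul_eq_iff, smul_smul]
    exact hy s _ (by rw [mem_stabilizer_iff, ← smul_smul, inv_smul_eq_iff, hab])
  refine ⟨⟨fun s => u s • y (rep s), fun g s => ?_⟩, fun s => ?_⟩
  · change u (g • s) • y (rep (g • s)) = g • u s • y (rep s)
    rw [rep_smul, smul_smul]
    apply smul_eq_smul
    rw [← smul_smul, hu, ← rep_smul g, hu]
  · change P s (u s • y (rep s))
    simpa only [hu] using hP (u s) _ _ (hPy (rep s))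

def IsCoflabby (π C : Type*) [Group π] [AddCommGroup C] [DistribMulAction π C] : Prop :=
  ∀ H : Subgroup π, ∀ f : H → C, IsCocycle₁ f → IsCoboundary₁ f

section

variable {π C E M : Type*} [Group π] [AddCommGroup C] [AddCommGroup E] [AddCommGroup M]
  [DistribMulAction π C] [DistribMulAction π E] [DistribMulAction π M] {ι : C →+ E} {pr : E →+ M}

theorem exists_fixed_lift_of_isCoboundary₁ (hι : ∀ (g : π) c, ι (g • c) = g • ι c)
    (hpr : ∀ (g : π) e, pr (g • e) = g • pr e) (hinj : Function.Injective ι)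
    (hsurj : Function.Surjective pr) (hexact : ∀ e, pr e = 0 ↔ ∃ c, ι c = e)
    (H : Subgroup π) (hH : ∀ f : H → C, IsCocycle₁ f → IsCoboundary₁ f)
    {m : M} (hm : ∀ h ∈ H, h • m = m) :
    ∃ e, pr e = m ∧ ∀ h ∈ H, h • e = e := by
  obtain ⟨e₀, rfl⟩ := hsurj m
  have exists_defect : ∀ h : H, ∃ c, ι c = (h : π) • e₀ - e₀ := fun h =>
    (hexact _).mp (by rw [map_sub, hpr, hm h h.2, sub_self])
  choose f hf using exists_defect
  have hf_cocycle : IsCocycle₁ f := fun g h => hinj <| by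
    rw [map_add, Subgroup.smul_def, hι, hf, hf, hf, Subgroup.coe_mul, mul_smul, smul_sub]
    abel
  obtain ⟨c, hc⟩ := hH f hf_cocycle
  have hιc : pr (ι c) = 0 := (hexact _).mpr ⟨c, rfl⟩
  refine ⟨e₀ - ι c, by rw [map_sub, hιc, sub_zero], fun h hh => ?_⟩
  have hc' : ι (h • c) = ι c + (h • e₀ - e₀) := by
    rw [← hf ⟨h, hh⟩, ← hc ⟨h, hh⟩, Subgroup.mk_smul, map_sub, add_sub_cancel]
  rw [smul_sub, ← hι, hc']
  abel

theorem Finsupp.linearCombination_mapDomain_smul {S : Type*} [MulAction π S] (F : S →[π] E)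
    (g : π) (y : S →₀ ℤ) :
    linearCombination ℤ F (mapDomain (g • ·) y) = g • linearCombination ℤ F y := by
  have : ⇑F ∘ (g • ·) = DistribSMul.toLinearMap ℤ E g ∘ F := funext (map_smul F g)
  rw [linearCombination_mapDomain, this, ← LinearMap.map_finsupp_linearCombination]
  rfl

theorem exists_equivariant_lift_of_permutation {S : Type*} [MulAction π S]
    (hι : ∀ (g : π) c, ι (g • c) = g • ι c) (hpr : ∀ (g : π) e, pr (g • e) = g • pr e)
    (hinj : Function.Injective ι) (hsurj : Function.Surjective pr)
    (hexact : ∀ e, pr e = 0 ↔ ∃ c, ι c = e) (hC : IsCoflabby π C)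
    (φ : (S →₀ ℤ) →+ M) (hφ : ∀ (g : π) y, φ (Finsupp.mapDomain (g • ·) y) = g • φ y) :
    ∃ ψ : (S →₀ ℤ) →+ E,
      (∀ (g : π) y, ψ (Finsupp.mapDomain (g • ·) y) = g • ψ y) ∧ pr.comp ψ = φ := by
  have hφ_single : ∀ (g : π) s, φ (.single (g • s) 1) = g • φ (.single s 1) := fun g s => by
    rw [← hφ, Finsupp.mapDomain_single]
  obtain ⟨F, hF⟩ := exists_mulActionHom_of_stabilizer_fixed (fun s e => pr e = φ (.single s 1))
    (fun g s e he => by rw [hpr, he, hφ_single])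
    (fun s => exists_fixed_lift_of_isCoboundary₁ hι hpr hinj hsurj hexact _ (hC _)
      fun h hh => by rw [← hφ_single, hh])
  refine ⟨(Finsupp.linearCombination ℤ F).toAddMonoidHom,
    Finsupp.linearCombination_mapDomain_smul F, ?_⟩
  ext s
  simp [hF]

end

theorem invertible_lattice_sequence_splits_general
    (π : Type) [Group π]
    (C E M : Type) [AddCommGroup C] [AddCommGroup E] [AddCommGroup M]
    [DistribMulAction π C] [DistribMulAction π E] [DistribMulAction π M]
    (hMinv : ∃ (S : Type) (_ : Fintype S) (a : π →* Equiv.Perm S)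
        (i : M →+ (S →₀ ℤ)) (r : (S →₀ ℤ) →+ M),
        (∀ (g : π) (x : M), i (g • x) = Finsupp.mapDomain (a g) (i x)) ∧
        (∀ (g : π) (y : S →₀ ℤ), r (Finsupp.mapDomain (a g) y) = g • r y) ∧
        ∀ x, r (i x) = x)
    (hC : ∀ (H : Subgroup π) (f : H → C),
        (∀ g h : H, f (g * h) = f g + (g : π) • f h) →
        ∃ c : C, ∀ g : H, f g = (g : π) • c - c)
    (ι : C →+ E) (pr : E →+ M)
    (hι : ∀ (g : π) (c : C), ι (g • c) = g • ι c)
    (hpr : ∀ (g : π) (e : E), pr (g • e) = g • pr e)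
    (hinj : Function.Injective ι) (hsurj : Function.Surjective pr)
    (hexact : ∀ e : E, pr e = 0 ↔ ∃ c, ι c = e) :
    ∃ s : M →+ E, (∀ (g : π) (x : M), s (g • x) = g • s x) ∧ ∀ x, pr (s x) = x := by
  obtain ⟨S, _, a, i, r, hi, hr, hri⟩ := hMinv
  let := MulAction.compHom S a
  have hC' : IsCoflabby π C := fun H f hf =>
    let ⟨c, hc⟩ := hC H f fun g h => (hf g h).trans (add_comm _ _)
    ⟨c, fun g => (hc g).symm⟩
  obtain ⟨ψ, hψ, hprψ⟩ :=
    exists_equivariant_lift_of_permutation hι hpr hinj hsurj hexact hC' r hr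
  refine ⟨ψ.comp i, fun g x => ?_, fun x => ?_⟩
  · rw [AddMonoidHom.comp_apply, hi]
    exact hψ g (i x)
  · exact (DFunLike.congr_fun hprψ (i x)).trans (hri x)

/-- Let `π` be a finite group and `C`, `E`, `M` be `ℤπ`-lattices (finitely
generated, ℤ-torsion-free `ℤπ`-modules).  Suppose `M` is invertible, i.e. a
direct summand of a permutation `π`-lattice (here expressed as: `M` is a
π-equivariant retract of `ℤ[S]` for a finite `π`-set `S`).  Then every exact
sequence `0 → C → E → M → 0` of `π`-lattices with `C` coflabby
(`H¹(π', C) = 0` for every subgroup `π'`, expressed via 1-cocycles being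
1-coboundaries) splits equivariantly. -/
theorem invertible_lattice_sequence_splits
    (π : Type) [Group π] [Finite π]
    (C E M : Type) [AddCommGroup C] [AddCommGroup E] [AddCommGroup M]
    [DistribMulAction π C] [DistribMulAction π E] [DistribMulAction π M]
    [AddGroup.FG C] [AddGroup.FG E] [AddGroup.FG M]
    [NoZeroSMulDivisors ℤ C] [NoZeroSMulDivisors ℤ E] [NoZeroSMulDivisors ℤ M]
    (hMinv : ∃ (S : Type) (_ : Fintype S) (a : π →* Equiv.Perm S)
        (i : M →+ (S →₀ ℤ)) (r : (S →₀ ℤ) →+ M),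
        (∀ (g : π) (x : M), i (g • x) = Finsupp.mapDomain (a g) (i x)) ∧
        (∀ (g : π) (y : S →₀ ℤ), r (Finsupp.mapDomain (a g) y) = g • r y) ∧
        ∀ x, r (i x) = x)
    (hC : ∀ (H : Subgroup π) (f : H → C),
        (∀ g h : H, f (g * h) = f g + (g : π) • f h) →
        ∃ c : C, ∀ g : H, f g = (g : π) • c - c)
    (ι : C →+ E) (pr : E →+ M)
    (hι : ∀ (g : π) (c : C), ι (g • c) = g • ι c)
    (hpr : ∀ (g : π) (e : E), pr (g • e) = g • pr e)
    (hinj : Function.Injective ι) (hsurj : Function.Surjective pr)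
    (hexact : ∀ e : E, pr e = 0 ↔ ∃ c, ι c = e) :
    ∃ s : M →+ E, (∀ (g : π) (x : M), s (g • x) = g • s x) ∧ ∀ x, pr (s x) = x :=
  invertible_lattice_sequence_splits_general π C E M hMinv hC ι pr hι hpr hinj hsurj hexact
end

section
/- Let π be a finite group. If M is an invertible π-lattice and σ ∈ π, then M/(σ^n − 1)M is torsion-free for every n dividing the order of σ. -/
private lemma perm_case (S : Type) [Fintype S] (τ : Equiv.Perm S) :
    ∀ k : ℤ, k ≠ 0 → ∀ v : S →₀ ℤ,
      k • v ∈ AddSubgroup.closure {z : S →₀ ℤ | ∃ w, z = Finsupp.mapDomain τ w - w} →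
      v ∈ AddSubgroup.closure {z : S →₀ ℤ | ∃ w, z = Finsupp.mapDomain τ w - w} := by
  intro k hk v hv
  set N := AddSubgroup.closure {z : S →₀ ℤ | ∃ w, z = Finsupp.mapDomain τ w - w} with hN
  have hd : 0 < orderOf τ := orderOf_pos τ
  -- orbit setoid
  have hrel_symm : ∀ s t : S, (∃ m : ℕ, (τ ^ m) s = t) → (∃ m : ℕ, (τ ^ m) t = s) := by
    rintro s t ⟨m, rfl⟩
    refine ⟨m * (orderOf τ - 1), ?_⟩
    rw [← Equiv.Perm.mul_apply, ← pow_add]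
    have : m * (orderOf τ - 1) + m = orderOf τ * m := by
      rw [← Nat.mul_succ, Nat.sub_one, Nat.succ_pred_eq_of_pos hd, Nat.mul_comm]
    rw [this, pow_mul, pow_orderOf_eq_one, one_pow, Equiv.Perm.one_apply]
  let sd : Setoid S :=
    ⟨fun s t => ∃ m : ℕ, (τ ^ m) s = t,
     ⟨fun s => ⟨0, rfl⟩, fun h => hrel_symm _ _ h, by
        rintro s t u ⟨m, rfl⟩ ⟨m', rfl⟩
        exact ⟨m' + m, by rw [← Equiv.Perm.mul_apply, ← pow_add]⟩⟩⟩
  -- lemma A : mapDomain (τ^m) w - w ∈ N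
  have lemA : ∀ (m : ℕ) (w : S →₀ ℤ), Finsupp.mapDomain (⇑(τ ^ m)) w - w ∈ N := by
    intro m
    induction m with
    | zero => intro w; simp only [pow_zero]; simp
    | succ m ih =>
      intro w
      have hcoe : ⇑(τ ^ (m + 1)) = ⇑τ ∘ ⇑(τ ^ m) := by
        rw [pow_succ']; rfl
      have : Finsupp.mapDomain (⇑(τ ^ (m + 1))) w - w =
          (Finsupp.mapDomain τ (Finsupp.mapDomain (⇑(τ ^ m)) w)
            - Finsupp.mapDomain (⇑(τ ^ m)) w)
          + (Finsupp.mapDomain (⇑(τ ^ m)) w - w) := by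
        rw [hcoe, Finsupp.mapDomain_comp]; abel
      rw [this]
      exact add_mem (AddSubgroup.subset_closure ⟨_, rfl⟩) (ih w)
  -- orbit-sum map
  let φ : (S →₀ ℤ) →+ (Quotient sd →₀ ℤ) :=
    Finsupp.mapDomain.addMonoidHom (Quotient.mk sd)
  have hmk : ∀ s : S, Quotient.mk sd (τ s) = Quotient.mk sd s := by
    intro s
    exact Quotient.sound (hrel_symm s (τ s) ⟨1, by simp⟩)
  have hφN : N ≤ φ.ker := by
    rw [hN, AddSubgroup.closure_le]
    rintro z ⟨w, rfl⟩
    simp only [SetLike.mem_coe, AddMonoidHom.mem_ker, map_sub, sub_eq_zero]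
    show Finsupp.mapDomain _ (Finsupp.mapDomain _ w) = Finsupp.mapDomain _ w
    rw [← Finsupp.mapDomain_comp]
    congr 1
    funext s
    exact hmk s
  have hφv : φ v = 0 := by
    have h1 : φ (k • v) = 0 := hφN hv
    rw [map_zsmul] at h1
    exact (smul_eq_zero.mp h1).resolve_left hk
  -- v - ψ v ∈ N
  have hψ : ∀ u : S →₀ ℤ,
      u - Finsupp.mapDomain (fun s => (Quotient.mk sd s).out) u ∈ N := by
    intro u
    induction u using Finsupp.induction_linear with
    | zero => simp [zero_mem]
    | add f g hf hg =>
      rw [Finsupp.mapDomain_add]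
      have : f + g - (Finsupp.mapDomain (fun s => (Quotient.mk sd s).out) f
          + Finsupp.mapDomain (fun s => (Quotient.mk sd s).out) g)
          = (f - Finsupp.mapDomain (fun s => (Quotient.mk sd s).out) f)
          + (g - Finsupp.mapDomain (fun s => (Quotient.mk sd s).out) g) := by abel
      rw [this]
      exact add_mem hf hg
    | single s b =>
      rw [Finsupp.mapDomain_single]
      obtain ⟨m, hm⟩ := Quotient.mk_out (s := sd) s
      have : Finsupp.single s b = Finsupp.mapDomain (⇑(τ ^ m))
          (Finsupp.single (Quotient.mk sd s).out b) := by
        rw [Finsupp.mapDomain_single, hm]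
      rw [this]
      exact lemA m _
  have := hψ v
  have hψv : Finsupp.mapDomain (fun s => (Quotient.mk sd s).out) v = 0 := by
    have hcomp : Finsupp.mapDomain (fun s => (Quotient.mk sd s).out) v
        = Finsupp.mapDomain (Quotient.out) (φ v) := by
      show _ = Finsupp.mapDomain Quotient.out (Finsupp.mapDomain (Quotient.mk sd) v)
      rw [← Finsupp.mapDomain_comp]
      rfl
    rw [hcomp, hφv, Finsupp.mapDomain_zero]
  rwa [hψv, sub_zero] at this

/-- Let `π` be a finite group and `M` an invertible `ℤπ`-lattice (a direct
summand of a permutation lattice, here: a π-equivariant retract of `ℤ[S]` for a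
finite `π`-set `S`).  Then for any `σ ∈ π` and any `n` dividing the order of
`σ`, the quotient `M/(σⁿ − 1)M` is ℤ-torsion-free; i.e. if `k • x` lies in the
subgroup `(σⁿ − 1)M` for some nonzero integer `k`, then so does `x`. -/
theorem invertible_lattice_quotient_torsion_free
    (π : Type) [Group π] [Finite π]
    (M : Type) [AddCommGroup M] [DistribMulAction π M]
    [AddGroup.FG M] [NoZeroSMulDivisors ℤ M]
    (hMinv : ∃ (S : Type) (_ : Fintype S) (a : π →* Equiv.Perm S)
        (i : M →+ (S →₀ ℤ)) (r : (S →₀ ℤ) →+ M),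
        (∀ (g : π) (x : M), i (g • x) = Finsupp.mapDomain (a g) (i x)) ∧
        (∀ (g : π) (y : S →₀ ℤ), r (Finsupp.mapDomain (a g) y) = g • r y) ∧
        ∀ x, r (i x) = x)
    (σ : π) (n : ℕ) (hn : n ∣ orderOf σ) :
    ∀ k : ℤ, k ≠ 0 → ∀ x : M,
      k • x ∈ AddSubgroup.closure {z : M | ∃ y : M, z = (σ ^ n) • y - y} →
      x ∈ AddSubgroup.closure {z : M | ∃ y : M, z = (σ ^ n) • y - y} := by
  obtain ⟨S, _, a, i, r, hi, hr, hri⟩ := hMinv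
  intro k hk x hx
  set τ := a (σ ^ n) with hτ
  set NM := AddSubgroup.closure {z : M | ∃ y : M, z = (σ ^ n) • y - y} with hNM
  set NS := AddSubgroup.closure {z : S →₀ ℤ | ∃ w, z = Finsupp.mapDomain τ w - w} with hNS
  have hiN : NM ≤ NS.comap i := by
    rw [hNM, AddSubgroup.closure_le]
    rintro z ⟨y, rfl⟩
    simp only [SetLike.mem_coe, AddSubgroup.mem_comap, map_sub]
    rw [hi]
    exact AddSubgroup.subset_closure ⟨i y, rfl⟩
  have hix : i x ∈ NS := by
    have : k • i x ∈ NS := by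
      rw [← map_zsmul]
      exact hiN hx
    exact perm_case S τ k hk (i x) this
  have hrN : NS ≤ NM.comap r := by
    rw [hNS, AddSubgroup.closure_le]
    rintro z ⟨w, rfl⟩
    simp only [SetLike.mem_coe, AddSubgroup.mem_comap, map_sub]
    rw [hτ, hr]
    exact AddSubgroup.subset_closure ⟨r w, rfl⟩
  have := hrN hix
  rwa [AddSubgroup.mem_comap, hri] at this
end
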